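/- Let (V, l, r) be a representation of a Leibniz algebra g. Then ρ : g → gl(gl(V)) ⊕ gl(V) defined by ρ(x) = [l_x, ·] + r_x is a Leibniz algebra homomorphism from g to the omni-Lie algebra ol(gl(V)); i.e., ρ is an omni-representation of g on gl(V) ≅ V*⊗V. -/
import Mathlib


/-- The omni-Lie bracket on `gl(W) ⊕ W`. -/
def omniBracket {k W : Type*} [Field k] [AddCommGroup W] [Module k W]
    (p q : Module.End k W × W) : Module.End k W × W :=
  (p.1 * q.1 - q.1 * p.1, p.1 q.2)

/-- For a representation `(V,l,r)` of a Leibniz algebra `g`, the map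
`ρ(x) = ad_{l_x} + r_x` is a Leibniz algebra homomorphism `g → ol(gl(V))`,
i.e. an omni-representation of `g` on `gl(V) ≅ V*⊗V`. -/
theorem stmt10 {k g V : Type*} [Field k] [AddCommGroup g] [Module k g]
    [AddCommGroup V] [Module k V]
    (b : g →ₗ[k] g →ₗ[k] g)
    (hLeib : ∀ x y z, b x (b y z) = b (b x y) z + b y (b x z))
    (l r : g →ₗ[k] Module.End k V)
    (hl : ∀ x y, l (b x y) = l x * l y - l y * l x)
    (hr : ∀ x y, r (b x y) = l x * r y - r y * l x)
    (hlr : ∀ x y, r y * l x = -(r y * r x))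
    (ρ : g → Module.End k (Module.End k V) × Module.End k V)
    (hρ : ∀ x, ρ x = (LinearMap.mulLeft k (l x) - LinearMap.mulRight k (l x), r x)) :
    ∀ x y, ρ (b x y) = omniBracket (ρ x) (ρ y) := by
  intro x y
  rw [hρ, hρ, hρ]
  unfold omniBracket
  refine Prod.ext ?_ ?_
  · ext A
    simp only [hl, LinearMap.sub_apply, Module.End.mul_apply, LinearMap.mulLeft_apply,
      LinearMap.mulRight_apply, sub_mul, mul_sub]
    noncomm_ring
  · simp [hr]
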